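/- arXiv:1602.07713 — 5 statements merged into one kernel-verified Lean document; each statement's English description precedes it below -/
import Mathlib

section
/- Let q and α be reals with 0 < q < 1 and 0 < α < 1, and let m < n be integers. Then (q^m − q^n)_q^{−α} = ((1 − q^{n−m})/(q^α − q^{n−m})) · (q^{m−1} − q^n)_q^{−α}. -/
/-!
Peeling off the `j = 0` factor of the defining product of `(q^m - q^n)_q^{-α}` leaves the
product for `(q^{m-1} - q^n)_q^{-α}`, whose exponent offset is `n - m + 1`. The peeled factor is
`(1 - q^{n-m}) / (1 - q^{n-m-α}) = q^α (1 - q^{n-m}) / (q^α - q^{n-m})`, and the extra `q^α`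
is absorbed by the prefactor `q^{-(m-1)α} = q^{-mα} q^α`.
-/

/-- The q-factorial power `(q^m - q^k)_q^{-α}` for integers `m < k`, defined by the
convergent infinite product
`q^{-mα} · ∏_{j=0}^∞ (1 - q^{k-m+j}) / (1 - q^{k-m+j-α})`. -/
noncomputable def qFac (q α : ℝ) (m k : ℤ) : ℝ :=
  q ^ (-(m : ℝ) * α) *
    ∏' j : ℕ, (1 - q ^ (((k - m : ℤ) : ℝ) + (j : ℝ))) /
      (1 - q ^ (((k - m : ℤ) : ℝ) + (j : ℝ) - α))

open Real

section QProduct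

variable {q : ℝ}

theorem summable_rpow_add_natCast (hq0 : 0 < q) (hq1 : q < 1) (c : ℝ) :
    Summable fun j : ℕ => q ^ (c + j) := by
  simpa only [rpow_add hq0, rpow_natCast] using
    (summable_geometric_of_lt_one hq0.le hq1).mul_left (q ^ c)

theorem summable_log_one_sub_rpow_add_natCast (hq0 : 0 < q) (hq1 : q < 1) (c : ℝ) :
    Summable fun j : ℕ => log (1 - q ^ (c + j)) := by
  simpa only [sub_eq_add_neg] using
    Real.summable_log_one_add_of_summable (summable_rpow_add_natCast hq0 hq1 c).neg

theorem one_sub_rpow_pos (hq0 : 0 < q) (hq1 : q < 1) {x : ℝ} (hx : 0 < x) : 0 < 1 - q ^ x :=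
  sub_pos.2 (rpow_lt_one hq0.le hq1 hx)

theorem multipliable_one_sub_rpow_div (hq0 : 0 < q) (hq1 : q < 1) {c α : ℝ} (hc : 0 < c)
    (hαc : α < c) :
    Multipliable fun j : ℕ => (1 - q ^ (c + j)) / (1 - q ^ (c + j - α)) := by
  have hnum (j : ℕ) : 0 < 1 - q ^ (c + j) := one_sub_rpow_pos hq0 hq1 (by positivity)
  have hden (j : ℕ) : 0 < 1 - q ^ (c + j - α) :=
    one_sub_rpow_pos hq0 hq1 (by linarith [(Nat.cast_nonneg j : (0 : ℝ) ≤ j)])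
  refine Real.multipliable_of_summable_log (fun j => div_pos (hnum j) (hden j)) ?_
  have hlog := (summable_log_one_sub_rpow_add_natCast hq0 hq1 c).sub
    (summable_log_one_sub_rpow_add_natCast hq0 hq1 (c - α))
  refine hlog.congr fun j => ?_
  rw [log_div (hnum j).ne' (hden j).ne', sub_add_eq_add_sub]

theorem tprod_one_sub_rpow_div_eq_mul (hq0 : 0 < q) (hq1 : q < 1) {c α : ℝ} (hc : 0 < c)
    (hαc : α < c) :
    ∏' j : ℕ, (1 - q ^ (c + j)) / (1 - q ^ (c + j - α)) =
      (1 - q ^ c) / (1 - q ^ (c - α)) *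
        ∏' j : ℕ, (1 - q ^ (c + 1 + j)) / (1 - q ^ (c + 1 + j - α)) := by
  have hshift := multipliable_one_sub_rpow_div hq0 hq1 (c := c + 1) (α := α) (by linarith)
    (by linarith)
  rw [tprod_eq_zero_mul']
  · simp only [Nat.cast_zero, add_zero, Nat.cast_succ, add_assoc, add_comm (1 : ℝ)]
  · simpa only [Nat.cast_succ, add_assoc, add_comm (1 : ℝ)] using hshift

end QProduct

theorem qFac_shift_first_general (q α : ℝ) (hq0 : 0 < q) (hq1 : q < 1)
    (hα1 : α < 1) (m n : ℤ) (hmn : m < n) :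
    qFac q α m n =
      ((1 - q ^ ((n - m : ℤ) : ℝ)) / (q ^ α - q ^ ((n - m : ℤ) : ℝ))) *
        qFac q α (m - 1) n := by
  have hd : (1 : ℝ) ≤ ((n - m : ℤ) : ℝ) := by exact_mod_cast (by omega : (1 : ℤ) ≤ n - m)
  have hoffset : ((n - (m - 1) : ℤ) : ℝ) = ((n - m : ℤ) : ℝ) + 1 := by push_cast; ring
  have hprefactor : q ^ (-((m - 1 : ℤ) : ℝ) * α) = q ^ (-(m : ℝ) * α) * q ^ α := by
    rw [← rpow_add hq0]; congr 1; push_cast; ring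
  rw [qFac, qFac, hoffset, hprefactor]
  generalize ((n - m : ℤ) : ℝ) = d at hd ⊢
  have hden : q ^ α - q ^ d = q ^ α * (1 - q ^ (d - α)) := by
    rw [mul_sub, mul_one, ← rpow_add hq0, add_sub_cancel]
  have hden_pos : 0 < 1 - q ^ (d - α) := one_sub_rpow_pos hq0 hq1 (by linarith)
  rw [tprod_one_sub_rpow_div_eq_mul hq0 hq1 (by linarith) (by linarith), hden]
  field_simp

theorem qFac_shift_first (q α : ℝ) (hq0 : 0 < q) (hq1 : q < 1)
    (hα0 : 0 < α) (hα1 : α < 1) (m n : ℤ) (hmn : m < n) :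
    qFac q α m n =
      ((1 - q ^ ((n - m : ℤ) : ℝ)) / (q ^ α - q ^ ((n - m : ℤ) : ℝ))) *
        qFac q α (m - 1) n :=
  qFac_shift_first_general q α hq0 hq1 hα1 m n hmn
end

section
/- Let q ∈ (0,1), let α be a real that is not an integer, and let m, k be integers with k ≥ m + 2. Then the nabla q-derivative of the q-factorial power with respect to its first variable satisfies [(q^m − q^k)_q^{α} − (q^{m+1} − q^k)_q^{α}] / ((1 − q) q^m) = ((1 − q^{α})/(1 − q)) · (q^m − q^k)_q^{α−1}. -/
/-!
Write `Φ(a, b) = ∏_{j ≥ 0} (1 - a q^j) / (1 - b q^j)`, `x = q^{k-m-1}` and `y = q^α`. All three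
factorial powers in the identity are powers of `q` times the single product `Φ(x q, x y q)`:
moving `m` to `m + 1` splits off the first factor `(1 - x) / (1 - x y)`, and lowering `α` by one
multiplies by the telescoping product `Φ(x y q, x y) = 1 / (1 - x y)`. The identity then reduces
to `1 - y (1 - x) / (1 - x y) = (1 - y) / (1 - x y)`. Since `α` is not an integer, no factor
`1 - x y q^j` vanishes.
-/

/-- The q-factorial power `(q^m - q^k)_q^{β}` for integers `m < k`, defined by the
convergent infinite product
`q^{mβ} · ∏_{j=0}^∞ (1 - q^{k-m+j}) / (1 - q^{k-m+j+β})`. -/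
noncomputable def qFacB (q β : ℝ) (m k : ℤ) : ℝ :=
  q ^ ((m : ℝ) * β) *
    ∏' j : ℕ, (1 - q ^ (((k - m : ℤ) : ℝ) + (j : ℝ))) /
      (1 - q ^ (((k - m : ℤ) : ℝ) + (j : ℝ) + β))

open Filter Topology

section qProdRatio

variable {𝕜 : Type*} [NormedField 𝕜]

/-- The ratio `(a; q)_∞ / (b; q)_∞` of two q-Pochhammer symbols. -/
noncomputable def qProdRatio (q a b : 𝕜) : 𝕜 :=
  ∏' j : ℕ, (1 - a * q ^ j) / (1 - b * q ^ j)

theorem multipliable_qProdRatio [CompleteSpace 𝕜] {q : 𝕜} (hq : ‖q‖ < 1) (a b : 𝕜) :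
    Multipliable fun j : ℕ => (1 - a * q ^ j) / (1 - b * q ^ j) := by
  have hsmall : ∀ᶠ j : ℕ in atTop, ‖b * q ^ j‖ ≤ 1 / 2 := by
    have : Tendsto (fun j : ℕ => b * q ^ j) atTop (𝓝 0) := by
      simpa using (tendsto_pow_atTop_nhds_zero_of_norm_lt_one hq).const_mul b
    exact this.norm.eventually_le_const (by norm_num [norm_zero])
  -- The factors are `1 + (b - a) q^j / (1 - b q^j)`, and eventually `‖1 - b q^j‖ ≥ 1/2`.
  have hsum : Summable fun j : ℕ => ‖(1 - a * q ^ j) / (1 - b * q ^ j) - 1‖ := by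
    refine Summable.of_norm_bounded_eventually_nat
      ((summable_geometric_of_lt_one (norm_nonneg q) hq).mul_left (2 * ‖b - a‖)) ?_
    filter_upwards [hsmall] with j hj
    have hden : 1 / 2 ≤ ‖1 - b * q ^ j‖ := by
      have := norm_sub_norm_le (1 : 𝕜) (b * q ^ j)
      rw [norm_one] at this
      linarith
    have hden0 : 1 - b * q ^ j ≠ 0 := norm_pos_iff.mp (by linarith)
    rw [norm_norm, div_sub_one hden0, show 1 - a * q ^ j - (1 - b * q ^ j) = (b - a) * q ^ j by
      ring, norm_div, norm_mul, norm_pow, div_le_iff₀ (by linarith)]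
    nlinarith [mul_nonneg (norm_nonneg (b - a)) (pow_nonneg (norm_nonneg q) j)]
  simpa using multipliable_one_add_of_summable hsum

variable [CompleteSpace 𝕜] {q : 𝕜}

theorem qProdRatio_eq_div_mul (hq : ‖q‖ < 1) (a b : 𝕜) :
    qProdRatio q a b = (1 - a) / (1 - b) * qProdRatio q (a * q) (b * q) := by
  have hshift : ∀ c : 𝕜, ∀ j : ℕ, c * q ^ (j + 1) = c * q * q ^ j := fun c j => by ring
  rw [qProdRatio, tprod_eq_zero_mul' ?_] <;> simp only [hshift, pow_zero, mul_one]
  · rfl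
  · exact multipliable_qProdRatio hq _ _

theorem qProdRatio_mul_qProdRatio (hq : ‖q‖ < 1) {b : 𝕜} (hb : ∀ j : ℕ, 1 - b * q ^ j ≠ 0)
    (a c : 𝕜) : qProdRatio q a b * qProdRatio q b c = qProdRatio q a c := by
  rw [qProdRatio, qProdRatio, ← (multipliable_qProdRatio hq a b).tprod_mul
    (multipliable_qProdRatio hq b c), qProdRatio]
  exact tprod_congr fun j => div_mul_div_cancel₀ (hb j)

theorem qProdRatio_mul_self (hq : ‖q‖ < 1) {b : 𝕜} (hb : ∀ j : ℕ, 1 - b * q ^ j ≠ 0) :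
    qProdRatio q (b * q) b = (1 - b)⁻¹ := by
  refine HasProd.tprod_eq ((multipliable_qProdRatio hq _ _).hasProd_iff_tendsto_nat.mpr ?_)
  have hpartial : ∀ n : ℕ, ∏ j ∈ Finset.range n, (1 - b * q * q ^ j) / (1 - b * q ^ j) =
      (1 - b * q ^ n) / (1 - b) := by
    intro n
    induction n with
    | zero => simpa using (div_self (by simpa using hb 0)).symm
    | succ n ih =>
      rw [Finset.prod_range_succ, ih, div_mul_div_comm, mul_comm (1 - b), pow_succ',
        ← mul_assoc, mul_div_mul_left _ _ (hb n)]
  simp only [hpartial]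
  simpa using (((tendsto_pow_atTop_nhds_zero_of_norm_lt_one hq).const_mul b).const_sub
    1).div_const (1 - b)

end qProdRatio

theorem qFacB_eq_qProdRatio {q : ℝ} (hq0 : 0 < q) (β : ℝ) (m k : ℤ) :
    qFacB q β m k = q ^ ((m : ℝ) * β) *
      qProdRatio q (q ^ ((k - m : ℤ) : ℝ)) (q ^ ((k - m : ℤ) : ℝ) * q ^ β) := by
  rw [qFacB, qProdRatio]
  congr 1
  refine tprod_congr fun j => ?_
  rw [add_right_comm, Real.rpow_add hq0, Real.rpow_add hq0, Real.rpow_add hq0,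
    Real.rpow_natCast]

theorem one_sub_rpow_ne_zero {q t : ℝ} (hq0 : 0 < q) (hq1 : q ≠ 1) (ht : t ≠ 0) :
    1 - q ^ t ≠ 0 := by
  rw [sub_ne_zero, ne_comm, ← Real.rpow_zero q, Ne, Real.rpow_right_inj hq0 hq1]
  exact ht

theorem qFac_nabla_first_general (q α : ℝ) (hq0 : 0 < q) (hq1 : q < 1)
    (hα : ∀ z : ℤ, α ≠ (z : ℝ)) (m k : ℤ) :
    (qFacB q α m k - qFacB q α (m + 1) k) / ((1 - q) * q ^ (m : ℝ)) =
      ((1 - q ^ α) / (1 - q)) * qFacB q (α - 1) m k := by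
  have hq : ‖q‖ < 1 := by rwa [Real.norm_of_nonneg hq0.le]
  set x := q ^ ((k - (m + 1) : ℤ) : ℝ) with hx
  set y := q ^ α with hy
  have hxq : q ^ ((k - m : ℤ) : ℝ) = x * q := by
    rw [hx, ← Real.rpow_add_one hq0.ne']; push_cast; ring_nf
  have hxy : ∀ j : ℕ, 1 - x * y * q ^ j ≠ 0 := fun j => by
    rw [hx, hy, ← Real.rpow_natCast, ← Real.rpow_add hq0, ← Real.rpow_add hq0]
    refine one_sub_rpow_ne_zero hq0 hq1.ne fun h => hα (m + 1 - k - j) ?_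
    push_cast at h ⊢
    linarith
  set P := qProdRatio q (x * q) (x * y * q)
  have hfac : qFacB q α m k = q ^ ((m : ℝ) * α) * P := by
    rw [qFacB_eq_qProdRatio hq0, hxq, ← hy, mul_right_comm]
  have hfac_succ : qFacB q α (m + 1) k = q ^ ((m : ℝ) * α) * y * ((1 - x) / (1 - x * y) * P) := by
    have hexp : ((m + 1 : ℤ) : ℝ) * α = m * α + α := by push_cast; ring
    rw [qFacB_eq_qProdRatio hq0, ← hx, qProdRatio_eq_div_mul hq, hexp, Real.rpow_add hq0]
  have hfac_pred : qFacB q (α - 1) m k = q ^ ((m : ℝ) * α) / q ^ (m : ℝ) * (P * (1 - x * y)⁻¹) := by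
    rw [qFacB_eq_qProdRatio hq0, hxq, Real.rpow_sub_one hq0.ne', ← hy,
      show x * q * (y / q) = x * y by field_simp, ← qProdRatio_mul_qProdRatio hq
        (b := x * y * q) (fun j => by rw [mul_assoc, ← pow_succ']; exact hxy (j + 1)),
      qProdRatio_mul_self hq hxy, mul_sub, mul_one, Real.rpow_sub hq0]
  rw [hfac, hfac_succ, hfac_pred]
  have hyx : 1 - y * x ≠ 0 := by simpa [mul_comm] using hxy 0
  have hq1_ne : 1 - q ≠ 0 := by linarith
  have hqm : q ^ (m : ℝ) ≠ 0 := (Real.rpow_pos_of_pos hq0 _).ne'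
  field_simp
  ring

/-- The nabla q-derivative of `t ↦ (t - q^k)_q^α` with respect to the first
variable at `t = q^m` equals `[α]_q · (q^m - q^k)_q^{α-1}`. -/
theorem qFac_nabla_first (q α : ℝ) (hq0 : 0 < q) (hq1 : q < 1)
    (hα : ∀ z : ℤ, α ≠ (z : ℝ)) (m k : ℤ) (hk : m + 2 ≤ k) :
    (qFacB q α m k - qFacB q α (m + 1) k) / ((1 - q) * q ^ (m : ℝ)) =
      ((1 - q ^ α) / (1 - q)) * qFacB q (α - 1) m k :=
  qFac_nabla_first_general q α hq0 hq1 hα m k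
end

section
/- Let q ∈ (0,1), let α be a real that is not an integer, and let m, k be integers with k ≥ m + 1. Then the nabla q-derivative of the q-factorial power with respect to its second variable satisfies [(q^m − q^k)_q^{α} − (q^m − q^{k+1})_q^{α}] / ((1 − q) q^k) = −((1 − q^{α})/(1 − q)) · (q^m − q^{k+1})_q^{α−1}. -/
open Real

noncomputable def qPochhammer (q x : ℝ) : ℝ := ∏' n : ℕ, (1 - q ^ (x + n))

section
variable {q : ℝ} (hq0 : 0 < q) (hq1 : q < 1)
include hq0 hq1

lemma summable_rpow_add_nat (x : ℝ) : Summable fun n : ℕ => q ^ (x + n) := by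
  simp_rw [rpow_add hq0, rpow_natCast]
  exact (summable_geometric_of_lt_one hq0.le hq1).mul_left _

lemma multipliable_one_sub_rpow_add_nat (x : ℝ) :
    Multipliable fun n : ℕ => 1 - q ^ (x + n) := by
  simpa [sub_eq_add_neg, abs_of_pos (rpow_pos_of_pos hq0 _)] using
    multipliable_one_add_of_summable (f := fun n : ℕ => -q ^ (x + n))
      (by simpa [abs_of_pos (rpow_pos_of_pos hq0 _)] using summable_rpow_add_nat hq0 hq1 x)

lemma qPochhammer_eq_mul_succ (x : ℝ) :
    qPochhammer q x = (1 - q ^ x) * qPochhammer q (x + 1) := by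
  have shift : (fun n : ℕ => 1 - q ^ (x + ↑(n + 1))) = fun n : ℕ => 1 - q ^ (x + 1 + n) := by
    funext n
    rw [Nat.cast_succ, add_comm (n : ℝ) 1, add_assoc]
  unfold qPochhammer
  rw [tprod_eq_zero_mul' (by rw [shift]; exact multipliable_one_sub_rpow_add_nat hq0 hq1 _), shift,
    Nat.cast_zero, add_zero]

lemma rpow_ne_one_of_ne_zero {y : ℝ} (hy : y ≠ 0) : q ^ y ≠ 1 := by
  rwa [← rpow_zero q, Ne, rpow_right_inj hq0 hq1.ne]

lemma qPochhammer_ne_zero {x : ℝ} (hx : ∀ n : ℕ, x + n ≠ 0) : qPochhammer q x ≠ 0 := by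
  have h := tprod_one_add_ne_zero_of_summable (f := fun n : ℕ => -q ^ (x + n))
    (fun n => by
      rw [← sub_eq_add_neg]; exact sub_ne_zero.2 (rpow_ne_one_of_ne_zero hq0 hq1 (hx n)).symm)
    (by simpa [abs_of_pos (rpow_pos_of_pos hq0 _)] using summable_rpow_add_nat hq0 hq1 x)
  simpa [qPochhammer, ← sub_eq_add_neg] using h

lemma tprod_div_eq_qPochhammer_div {x y : ℝ} (hy : qPochhammer q y ≠ 0) :
    ∏' n : ℕ, (1 - q ^ (x + n)) / (1 - q ^ (y + n)) = qPochhammer q x / qPochhammer q y :=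
  ((multipliable_one_sub_rpow_add_nat hq0 hq1 x).hasProd.div₀
    (multipliable_one_sub_rpow_add_nat hq0 hq1 y).hasProd hy).tprod_eq

lemma qPochhammer_int_add_ne_zero {β : ℝ} (hβ : ∀ z : ℤ, β ≠ z) (d : ℤ) :
    qPochhammer q (d + β) ≠ 0 :=
  qPochhammer_ne_zero hq0 hq1 fun n h => hβ (-d - n) (by push_cast; linarith)

lemma qFacB_eq_div {β : ℝ} (hβ : ∀ z : ℤ, β ≠ z) (m k : ℤ) :
    qFacB q β m k =
      q ^ ((m : ℝ) * β) * (qPochhammer q (k - m : ℤ) / qPochhammer q ((k - m : ℤ) + β)) := by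
  rw [qFacB, ← tprod_div_eq_qPochhammer_div hq0 hq1 (qPochhammer_int_add_ne_zero hq0 hq1 hβ _)]
  simp only [add_right_comm _ β]

end

theorem qFac_nabla_second_general (q α : ℝ) (hq0 : 0 < q) (hq1 : q < 1)
    (hα : ∀ z : ℤ, α ≠ (z : ℝ)) (m k : ℤ) :
    (qFacB q α m k - qFacB q α m (k + 1)) / ((1 - q) * q ^ (k : ℝ)) =
      -(((1 - q ^ α) / (1 - q)) * qFacB q (α - 1) m (k + 1)) := by
  have hα_pred : ∀ z : ℤ, α - 1 ≠ z := fun z h => hα (z + 1) (by push_cast; linarith)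
  have hsucc : ((k + 1 - m : ℤ) : ℝ) = ((k - m : ℤ) : ℝ) + 1 := by push_cast; ring
  have hne := qPochhammer_int_add_ne_zero hq0 hq1 hα (k - m)
  rw [qFacB_eq_div hq0 hq1 hα, qFacB_eq_div hq0 hq1 hα, qFacB_eq_div hq0 hq1 hα_pred, hsucc]
  set u : ℝ := ((k - m : ℤ) : ℝ) with hu
  rw [show u + 1 + (α - 1) = u + α by ring, add_right_comm u 1 α,
    qPochhammer_eq_mul_succ hq0 hq1 u]
  rw [qPochhammer_eq_mul_succ hq0 hq1 (u + α)] at hne ⊢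
  obtain ⟨hfirst, hrest⟩ := mul_ne_zero_iff.1 hne
  have hqk : q ^ (k : ℝ) = q ^ (m : ℝ) * q ^ u := by
    rw [← rpow_add hq0, hu]; push_cast; ring_nf
  have hqpred : q ^ ((m : ℝ) * (α - 1)) = q ^ ((m : ℝ) * α) / q ^ (m : ℝ) := by
    rw [mul_sub_one, rpow_sub hq0]
  rw [hqk, hqpred, rpow_add hq0 u α]
  rw [rpow_add hq0 u α] at hfirst
  have h1q : 1 - q ≠ 0 := by linarith
  field_simp
  ring

/-- The nabla q-derivative of `s ↦ (q^m - s)_q^α` with respect to the second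
variable at `s = q^k` equals `-[α]_q · (q^m - q^{k+1})_q^{α-1}`. -/
theorem qFac_nabla_second (q α : ℝ) (hq0 : 0 < q) (hq1 : q < 1)
    (hα : ∀ z : ℤ, α ≠ (z : ℝ)) (m k : ℤ) (hk : m + 1 ≤ k) :
    (qFacB q α m k - qFacB q α m (k + 1)) / ((1 - q) * q ^ (k : ℝ)) =
      -(((1 - q ^ α) / (1 - q)) * qFacB q (α - 1) m (k + 1)) :=
  qFac_nabla_second_general q α hq0 hq1 hα m k
end

section
/- (Caputo version) Let q, α ∈ (0,1), let n0 be an integer, and let y : ℤ → ℝ encode a function on T_q. Suppose y(n0) ≥ 0 and, for every integer n < n0, Σ_{i=n}^{n0} (q^n − q^{i+1})_q^{−α} (y(i) − y(i+1)) ≥ −(q^n − q^{n0+1})_q^{−α} · y(n0+1) (this says that the Caputo q-fractional derivative of order α based at qa, a = q^{n0}, satisfies (_qC_{qa}^{α} y)(t) ≥ −((t − qa)_q^{−α}/Γ_q(1−α)) y(qa) at every t = q^n with n < n0). Then y is c_q(α)-increasing on {q^n : n ≤ n0}, i.e. y(n−1) ≥ c_q(α) · y(n) for every integer n ≤ n0.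 -/
theorem sum_Icc_mul_sub_succ (F y : ℤ → ℝ) {n m : ℤ} (h : n ≤ m) :
    ∑ i ∈ Finset.Icc n m, F (i + 1) * (y i - y (i + 1)) =
      F (n + 1) * y n - F (m + 1) * y (m + 1) -
        ∑ i ∈ Finset.Icc (n + 1) m, (F i - F (i + 1)) * y i := by
  induction m, h using Int.leInduction with
  | base =>
    rw [Finset.Icc_self, Finset.Icc_eq_empty (by omega), Finset.sum_singleton, Finset.sum_empty]
    ring
  | succ m hnm ih =>
    rw [← Finset.insert_Icc_right_eq_Icc_add_one (by omega),
      ← Finset.insert_Icc_right_eq_Icc_add_one (by omega), Finset.sum_insert (by simp),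
      Finset.sum_insert (by simp), ih]
    ring

noncomputable def qFacFactor (q α x : ℝ) : ℝ := (1 - q ^ x) / (1 - q ^ (x - α))

noncomputable def qFacProd (q α d : ℝ) : ℝ := ∏' j : ℕ, qFacFactor q α (d + j)

section

variable {q α : ℝ}

theorem qFac_eq_rpow_mul_qFacProd (m k : ℤ) :
    qFac q α m k = q ^ (-(m : ℝ) * α) * qFacProd q α ((k - m : ℤ) : ℝ) := rfl

theorem one_le_qFacFactor (hq0 : 0 < q) (hq1 : q < 1) (hα : 0 ≤ α) {x : ℝ} (hx : α < x) :
    1 ≤ qFacFactor q α x := by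
  have hden : 0 < 1 - q ^ (x - α) := sub_pos.2 (Real.rpow_lt_one hq0.le hq1 (by linarith))
  have hpow : q ^ x ≤ q ^ (x - α) := Real.rpow_le_rpow_of_exponent_ge hq0 hq1.le (by linarith)
  rw [qFacFactor, le_div_iff₀ hden]
  linarith

theorem qFacFactor_sub_one_le (hq0 : 0 < q) (hq1 : q < 1) {d x : ℝ} (hd : α < d) (hdx : d ≤ x) :
    qFacFactor q α x - 1 ≤ q ^ (x - α) / (1 - q ^ (d - α)) := by
  have hden_d : 0 < 1 - q ^ (d - α) := sub_pos.2 (Real.rpow_lt_one hq0.le hq1 (by linarith))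
  have hden_x : 0 < 1 - q ^ (x - α) := sub_pos.2 (Real.rpow_lt_one hq0.le hq1 (by linarith))
  have hpow : q ^ (x - α) ≤ q ^ (d - α) :=
    Real.rpow_le_rpow_of_exponent_ge hq0 hq1.le (by linarith)
  calc qFacFactor q α x - 1 = (q ^ (x - α) - q ^ x) / (1 - q ^ (x - α)) := by
        rw [qFacFactor]; field_simp; ring
    _ ≤ q ^ (x - α) / (1 - q ^ (d - α)) :=
        div_le_div₀ (Real.rpow_pos_of_pos hq0 _).le
          (by linarith [Real.rpow_pos_of_pos hq0 x]) hden_d (by linarith)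

theorem multipliable_qFacFactor (hq0 : 0 < q) (hq1 : q < 1) (hα : 0 ≤ α) {d : ℝ} (hd : α < d) :
    Multipliable fun j : ℕ => qFacFactor q α (d + j) := by
  have hle (j : ℕ) : α < d + j := by linarith [(Nat.cast_nonneg j : (0 : ℝ) ≤ j)]
  have hbound (j : ℕ) : qFacFactor q α (d + j) - 1 ≤ q ^ (d - α) / (1 - q ^ (d - α)) * q ^ j := by
    refine (qFacFactor_sub_one_le hq0 hq1 hd (by simp)).trans_eq ?_
    rw [div_mul_eq_mul_div, ← Real.rpow_natCast, ← Real.rpow_add hq0]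
    ring_nf
  have hsum : Summable fun j : ℕ => qFacFactor q α (d + j) - 1 :=
    Summable.of_nonneg_of_le (fun j => sub_nonneg.2 (one_le_qFacFactor hq0 hq1 hα (hle j))) hbound
      ((summable_geometric_of_lt_one hq0.le hq1).mul_left _)
  simpa using Real.multipliable_one_add_of_summable hsum

theorem qFacProd_eq_qFacFactor_mul (hq0 : 0 < q) (hq1 : q < 1) (hα : 0 ≤ α) {d : ℝ}
    (hd : α < d) : qFacProd q α d = qFacFactor q α d * qFacProd q α (d + 1) := by
  have h := tprod_eq_zero_mul' (f := fun j : ℕ => qFacFactor q α (d + j)) <| by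
    simpa only [Nat.cast_add, Nat.cast_one, add_right_comm _ (1 : ℝ), ← add_assoc] using
      multipliable_qFacFactor hq0 hq1 hα (d := d + 1) (by linarith)
  simpa only [qFacProd, Nat.cast_add, Nat.cast_one, Nat.cast_zero, add_zero, ← add_assoc,
    add_right_comm _ _ (1 : ℝ)] using h

theorem one_le_qFacProd (hq0 : 0 < q) (hq1 : q < 1) (hα : 0 ≤ α) {d : ℝ} (hd : α < d) :
    1 ≤ qFacProd q α d :=
  le_hasProd_of_le_prod (multipliable_qFacFactor hq0 hq1 hα hd).hasProd fun _ =>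
    Finset.one_le_prod fun j _ =>
      one_le_qFacFactor hq0 hq1 hα (by linarith [(Nat.cast_nonneg j : (0 : ℝ) ≤ j)])

theorem one_sub_inv_qFacFactor_one (hq0 : 0 < q) (hq1 : q < 1) :
    1 - (qFacFactor q α 1)⁻¹ = q ^ (1 - α) * (1 - q ^ α) / (1 - q) := by
  have hq : q ^ (1 - α) * q ^ α = q := by rw [← Real.rpow_add hq0]; simp
  have hq1' : 1 - q ≠ 0 := by linarith
  rw [qFacFactor, Real.rpow_one, inv_div]
  field_simp
  linear_combination hq

theorem lt_intCast_sub_of_lt_one (hα1 : α < 1) {m k : ℤ} (h : m < k) :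
    α < ((k - m : ℤ) : ℝ) := by
  have : (1 : ℝ) ≤ ((k - m : ℤ) : ℝ) := by exact_mod_cast (by omega : 1 ≤ k - m)
  linarith

theorem qFac_eq_qFacFactor_mul (hq0 : 0 < q) (hq1 : q < 1) (hα0 : 0 ≤ α) (hα1 : α < 1)
    {m k : ℤ} (h : m < k) :
    qFac q α m k = qFacFactor q α ((k - m : ℤ) : ℝ) * qFac q α m (k + 1) := by
  have hcast : ((k + 1 - m : ℤ) : ℝ) = ((k - m : ℤ) : ℝ) + 1 := by push_cast; ring
  rw [qFac_eq_rpow_mul_qFacProd, qFac_eq_rpow_mul_qFacProd, hcast,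
    qFacProd_eq_qFacFactor_mul hq0 hq1 hα0 (lt_intCast_sub_of_lt_one hα1 h)]
  ring

theorem qFac_pos (hq0 : 0 < q) (hq1 : q < 1) (hα0 : 0 ≤ α) (hα1 : α < 1) {m k : ℤ}
    (h : m < k) : 0 < qFac q α m k :=
  mul_pos (Real.rpow_pos_of_pos hq0 _)
    (one_pos.trans_le (one_le_qFacProd hq0 hq1 hα0 (lt_intCast_sub_of_lt_one hα1 h)))

theorem qFac_succ_le (hq0 : 0 < q) (hq1 : q < 1) (hα0 : 0 ≤ α) (hα1 : α < 1) {m k : ℤ}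
    (h : m < k) : qFac q α m (k + 1) ≤ qFac q α m k := by
  rw [qFac_eq_qFacFactor_mul hq0 hq1 hα0 hα1 h]
  exact le_mul_of_one_le_left (qFac_pos hq0 hq1 hα0 hα1 (by omega)).le
    (one_le_qFacFactor hq0 hq1 hα0 (lt_intCast_sub_of_lt_one hα1 h))

theorem qFac_sub_qFac_succ (hq0 : 0 < q) (hq1 : q < 1) (hα0 : 0 ≤ α) (hα1 : α < 1) {m k : ℤ}
    (h : m < k) :
    qFac q α m k - qFac q α m (k + 1) =
      (1 - (qFacFactor q α ((k - m : ℤ) : ℝ))⁻¹) * qFac q α m k := by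
  have hR : qFacFactor q α ((k - m : ℤ) : ℝ) ≠ 0 :=
    (one_pos.trans_le (one_le_qFacFactor hq0 hq1 hα0 (lt_intCast_sub_of_lt_one hα1 h))).ne'
  rw [qFac_eq_qFacFactor_mul hq0 hq1 hα0 hα1 h]
  field_simp

variable {n0 : ℤ} {y : ℤ → ℝ}

theorem sum_Icc_qFac_sub_mul_le
    (hC : ∀ n : ℤ, n < n0 →
      -(qFac q α n (n0 + 1) * y (n0 + 1)) ≤
        ∑ i ∈ Finset.Icc n n0, qFac q α n (i + 1) * (y i - y (i + 1)))
    {n : ℤ} (hn : n ≤ n0) :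
    ∑ i ∈ Finset.Icc n n0, (qFac q α (n - 1) i - qFac q α (n - 1) (i + 1)) * y i ≤
      qFac q α (n - 1) n * y (n - 1) := by
  have h := sum_Icc_mul_sub_succ (qFac q α (n - 1)) y (by omega : n - 1 ≤ n0)
  rw [sub_add_cancel] at h
  linarith [hC (n - 1) (by omega)]

theorem qFac_sub_mul_nonneg (hq0 : 0 < q) (hq1 : q < 1) (hα0 : 0 ≤ α) (hα1 : α < 1)
    {n i : ℤ} (hi : n < i) (hy : 0 ≤ y i) : 0 ≤ (qFac q α n i - qFac q α n (i + 1)) * y i :=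
  mul_nonneg (sub_nonneg.2 (qFac_succ_le hq0 hq1 hα0 hα1 hi)) hy

theorem nonneg_of_caputo (hq0 : 0 < q) (hq1 : q < 1) (hα0 : 0 ≤ α) (hα1 : α < 1)
    (hy : 0 ≤ y n0)
    (hC : ∀ n : ℤ, n < n0 →
      -(qFac q α n (n0 + 1) * y (n0 + 1)) ≤
        ∑ i ∈ Finset.Icc n n0, qFac q α n (i + 1) * (y i - y (i + 1))) :
    ∀ n ≤ n0, 0 ≤ y n := by
  suffices ∀ n ≤ n0, ∀ i ∈ Finset.Icc n n0, 0 ≤ y i from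
    fun n hn ↦ this n hn n (Finset.mem_Icc.2 ⟨le_rfl, hn⟩)
  intro n hn
  induction n, hn using Int.leInductionDown with
  | base =>
    intro i hi
    rw [Finset.mem_Icc] at hi
    rwa [show i = n0 by omega]
  | pred n hn ih =>
    have hsum : 0 ≤ ∑ i ∈ Finset.Icc n n0, (qFac q α (n - 1) i - qFac q α (n - 1) (i + 1)) * y i :=
      Finset.sum_nonneg fun i hi ↦
        qFac_sub_mul_nonneg hq0 hq1 hα0 hα1 (by rw [Finset.mem_Icc] at hi; omega) (ih i hi)
    have hprev : 0 ≤ y (n - 1) := nonneg_of_mul_nonneg_right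
      (hsum.trans (sum_Icc_qFac_sub_mul_le hC hn)) (qFac_pos hq0 hq1 hα0 hα1 (by omega))
    intro i hi
    obtain rfl | hi' : i = n - 1 ∨ i ∈ Finset.Icc n n0 := by rw [Finset.mem_Icc] at hi ⊢; omega
    exacts [hprev, ih i hi']

end

/-- Caputo version of the monotonicity theorem: if `y(a) ≥ 0` (with `a = q^{n0}`)
and the Caputo q-fractional derivative of order `α ∈ (0,1)` based at `qa` satisfies
`(_qC_{qa}^α y)(t) ≥ -((t - qa)_q^{-α}/Γ_q(1-α)) y(qa)` at every `t = q^n`, `n < n0`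
(multiplying through by `Γ_q(1-α) > 0`, this is the stated sum inequality),
then `y` is `c_q(α)`-increasing, where `c_q(α) = q^{1-α}(1-q^α)/(1-q)`. -/
theorem qFrac_monotone_caputo (q α : ℝ) (hq0 : 0 < q) (hq1 : q < 1)
    (hα0 : 0 < α) (hα1 : α < 1) (n0 : ℤ) (y : ℤ → ℝ)
    (hy : 0 ≤ y n0)
    (hC : ∀ n : ℤ, n < n0 →
      -(qFac q α n (n0 + 1) * y (n0 + 1)) ≤
        ∑ i ∈ Finset.Icc n n0, qFac q α n (i + 1) * (y i - y (i + 1))) :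
    ∀ n : ℤ, n ≤ n0 → q ^ (1 - α) * (1 - q ^ α) / (1 - q) * y n ≤ y (n - 1) := by
  intro n hn
  have hy_nonneg := nonneg_of_caputo hq0 hq1 hα0.le hα1 hy hC
  have hfirst : (qFac q α (n - 1) n - qFac q α (n - 1) (n + 1)) * y n ≤
      ∑ i ∈ Finset.Icc n n0, (qFac q α (n - 1) i - qFac q α (n - 1) (i + 1)) * y i :=
    Finset.single_le_sum (f := fun i ↦ (qFac q α (n - 1) i - qFac q α (n - 1) (i + 1)) * y i)
      (fun i hi ↦ qFac_sub_mul_nonneg hq0 hq1 hα0.le hα1 (by rw [Finset.mem_Icc] at hi; omega)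
        (hy_nonneg i (Finset.mem_Icc.1 hi).2))
      (Finset.mem_Icc.2 ⟨le_rfl, hn⟩)
  have hconst : qFac q α (n - 1) n - qFac q α (n - 1) (n + 1) =
      q ^ (1 - α) * (1 - q ^ α) / (1 - q) * qFac q α (n - 1) n := by
    rw [qFac_sub_qFac_succ hq0 hq1 hα0.le hα1 (by omega), sub_sub_cancel, Int.cast_one,
      one_sub_inv_qFacFactor_one hq0 hq1]
  refine le_of_mul_le_mul_left ?_ (qFac_pos hq0 hq1 hα0.le hα1 (by omega : n - 1 < n))
  calc qFac q α (n - 1) n * (q ^ (1 - α) * (1 - q ^ α) / (1 - q) * y n)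
      = (qFac q α (n - 1) n - qFac q α (n - 1) (n + 1)) * y n := by rw [hconst]; ring
    _ ≤ _ := hfirst
    _ ≤ qFac q α (n - 1) n * y (n - 1) := sum_Icc_qFac_sub_mul_le hC hn
end

section
/- (Strict version) Let q, α ∈ (0,1), let n0 be an integer, and let y : ℤ → ℝ encode a function on T_q. Suppose y(n0) > 0 and y is strictly increasing, i.e. y(n−1) > y(n) for every integer n ≤ n0. Then S_y(n) − S_y(n+1) > 0 for every integer n < n0 (i.e. the Riemann q-fractional derivative (_q∇_{qa}^{α} y)(q^n) of order α based at qa, a = q^{n0}, is strictly positive at every point t = q^n with n < n0). -/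
/-- `S q α n0 y n = Σ_{i=n}^{n0} q^i (q^n - q^{i+1})_q^{-α} y(i)`; for `n = n0 + 1`
the range is empty, so `S q α n0 y (n0+1) = 0`.  The Riemann q-fractional derivative
of order `α` based at `qa = q^{n0+1}`, evaluated at `t = q^n`, is
`(S q α n0 y n - S q α n0 y (n+1)) / ((1-q) q^n Γ_q(1-α))`,
whose sign is that of `S q α n0 y n - S q α n0 y (n+1)`. -/
noncomputable def S (q α : ℝ) (n0 : ℤ) (y : ℤ → ℝ) (n : ℤ) : ℝ :=
  ∑ i ∈ Finset.Icc n n0, q ^ (i : ℝ) * qFac q α n (i + 1) * y i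

open Finset Real

theorem sum_range_succ_mul_sub_mul_sum_range_pos {b z : ℕ → ℝ} {r : ℝ} (N : ℕ)
    (hb : ∀ k, 0 < b k) (hbr : ∀ k, b (k + 1) ≤ r * b k) (hr : r ≤ 1)
    (hz : ∀ k ≤ N, z k ≤ z 0) (hz0 : 0 < z 0) :
    0 < ∑ k ∈ range (N + 1), b k * z k - r * ∑ k ∈ range N, b k * z (k + 1) := by
  have hsplit : ∀ w : ℕ → ℝ, ∑ k ∈ range (N + 1), b k * w k - r * ∑ k ∈ range N, b k * w (k + 1)
      = b 0 * w 0 + ∑ k ∈ range N, (b (k + 1) - r * b k) * w (k + 1) := fun w => by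
    rw [sum_range_succ', mul_sum, ← sub_add_eq_add_sub, ← sum_sub_distrib]
    simp only [sub_mul, mul_assoc]
    ring
  have hconst : 0 < b 0 * z 0 + ∑ k ∈ range N, (b (k + 1) - r * b k) * z 0 := by
    rw [← hsplit fun _ => z 0, ← sum_mul, ← sum_mul, sum_range_succ]
    have hrest : 0 ≤ (1 - r) * ∑ k ∈ range N, b k :=
      mul_nonneg (sub_nonneg.2 hr) (sum_nonneg fun k _ => (hb k).le)
    rw [show (∑ k ∈ range N, b k + b N) * z 0 - r * ((∑ k ∈ range N, b k) * z 0)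
      = z 0 * (b N + (1 - r) * ∑ k ∈ range N, b k) by ring]
    exact mul_pos hz0 (add_pos_of_pos_of_nonneg (hb N) hrest)
  rw [hsplit]
  refine hconst.trans_le (add_le_add le_rfl (sum_le_sum fun k hk => ?_))
  exact mul_le_mul_of_nonpos_left (hz (k + 1) (mem_range.1 hk)) (sub_nonpos.2 (hbr k))

noncomputable def qRatioFactor (q α x : ℝ) : ℝ :=
  (1 - q ^ x) / (1 - q ^ (x - α))

noncomputable def qRatioProd (q α d : ℝ) : ℝ :=
  ∏' j : ℕ, qRatioFactor q α (d + j)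

theorem qFac_eq (q α : ℝ) (m k : ℤ) :
    qFac q α m k = q ^ (-(m : ℝ) * α) * qRatioProd q α ((k - m : ℤ) : ℝ) :=
  rfl

section qRatio

variable {q α : ℝ}

theorem one_le_qRatioFactor (hq0 : 0 < q) (hq1 : q < 1) (hα : 0 ≤ α) {x : ℝ} (hx : α < x) :
    1 ≤ qRatioFactor q α x := by
  rw [qRatioFactor, one_le_div (sub_pos.2 (rpow_lt_one hq0.le hq1 (by linarith)))]
  exact sub_le_sub_left (rpow_le_rpow_of_exponent_ge hq0 hq1.le (by linarith)) 1

theorem qRatioFactor_add_natCast_sub_one_le (hq0 : 0 < q) (hq1 : q < 1) (hα : 0 ≤ α)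
    {d : ℝ} (hd : α < d) (j : ℕ) :
    qRatioFactor q α (d + j) - 1 ≤ (qRatioFactor q α d - 1) * q ^ j := by
  have hsub : ∀ x, α < x → qRatioFactor q α x - 1 = (q ^ (x - α) - q ^ x) / (1 - q ^ (x - α)) :=
    fun x hx => by
      rw [qRatioFactor, div_sub_one (sub_pos.2 (rpow_lt_one hq0.le hq1 (by linarith))).ne']
      ring
  have hshift : ∀ x : ℝ, q ^ (x + j) = q ^ x * q ^ j := fun x => by
    rw [rpow_add hq0, rpow_natCast]
  have hj : (0 : ℝ) ≤ j := j.cast_nonneg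
  rw [hsub d hd, hsub (d + j) (by linarith), show d + j - α = d - α + j by ring,
    hshift, hshift, ← sub_mul, div_mul_eq_mul_div]
  apply div_le_div_of_nonneg_left
  · exact mul_nonneg (sub_nonneg.2 (rpow_le_rpow_of_exponent_ge hq0 hq1.le (by linarith)))
      (pow_nonneg hq0.le j)
  · exact sub_pos.2 (rpow_lt_one hq0.le hq1 (by linarith))
  · rw [← hshift]
    exact sub_le_sub_left (rpow_le_rpow_of_exponent_ge hq0 hq1.le (by linarith)) 1

theorem summable_log_qRatioFactor (hq0 : 0 < q) (hq1 : q < 1) (hα : 0 ≤ α)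
    {d : ℝ} (hd : α < d) : Summable fun j : ℕ => log (qRatioFactor q α (d + j)) := by
  have hj : ∀ j : ℕ, α < d + j := fun j => by linarith [j.cast_nonneg (α := ℝ)]
  have hsub : Summable fun j : ℕ => qRatioFactor q α (d + j) - 1 :=
    Summable.of_nonneg_of_le
      (fun j => sub_nonneg.2 (one_le_qRatioFactor hq0 hq1 hα (hj j)))
      (qRatioFactor_add_natCast_sub_one_le hq0 hq1 hα hd)
      ((summable_geometric_of_lt_one hq0.le hq1).mul_left _)
  simpa using Real.summable_log_one_add_of_summable hsub

theorem qRatioProd_pos (hq0 : 0 < q) (hq1 : q < 1) (hα : 0 ≤ α) {d : ℝ} (hd : α < d) :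
    0 < qRatioProd q α d := by
  have hj : ∀ j : ℕ, α < d + j := fun j => by linarith [j.cast_nonneg (α := ℝ)]
  rw [qRatioProd, ← rexp_tsum_eq_tprod
    (fun j => zero_lt_one.trans_le (one_le_qRatioFactor hq0 hq1 hα (hj j)))
    (summable_log_qRatioFactor hq0 hq1 hα hd)]
  exact exp_pos _

theorem qRatioProd_eq_mul (hq0 : 0 < q) (hq1 : q < 1) (hα : 0 ≤ α) {d : ℝ} (hd : α < d) :
    qRatioProd q α d = qRatioFactor q α d * qRatioProd q α (d + 1) := by
  have hj : ∀ j : ℕ, α < d + 1 + j := fun j => by linarith [j.cast_nonneg (α := ℝ)]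
  have hmul : Multipliable fun j : ℕ => qRatioFactor q α (d + 1 + j) :=
    Real.multipliable_of_summable_log
      (fun j => zero_lt_one.trans_le (one_le_qRatioFactor hq0 hq1 hα (hj j)))
      (summable_log_qRatioFactor hq0 hq1 hα (by linarith))
  rw [qRatioProd, tprod_eq_zero_mul' (by simpa only [Nat.cast_succ, ← add_assoc, add_right_comm]
    using hmul)]
  simp only [Nat.cast_zero, add_zero, Nat.cast_succ, qRatioProd, add_assoc, add_comm (1 : ℝ)]

theorem qRatioProd_add_one_le (hq0 : 0 < q) (hq1 : q < 1) (hα : 0 ≤ α) {d : ℝ} (hd : α < d) :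
    qRatioProd q α (d + 1) ≤ q ^ (-α) * qRatioProd q α d := by
  have hden : 0 < 1 - q ^ (d - α) := sub_pos.2 (rpow_lt_one hq0.le hq1 (by linarith))
  have hfactor : 1 ≤ q ^ (-α) * qRatioFactor q α d := by
    rw [qRatioFactor, mul_div_assoc', one_le_div hden, mul_sub, mul_one, ← rpow_add hq0,
      neg_add_eq_sub]
    linarith [one_le_rpow_of_pos_of_le_one_of_nonpos hq0 hq1.le (neg_nonpos.2 hα)]
  rw [qRatioProd_eq_mul hq0 hq1 hα hd, ← mul_assoc]
  exact le_mul_of_one_le_left (qRatioProd_pos hq0 hq1 hα (by linarith)).le hfactor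

theorem pow_succ_mul_qRatioProd_add_one_le (hq0 : 0 < q) (hq1 : q < 1) (hα : 0 ≤ α)
    {d : ℝ} (hd : α < d) (k : ℕ) :
    q ^ (k + 1) * qRatioProd q α (d + 1) ≤ q ^ (1 - α) * (q ^ k * qRatioProd q α d) := by
  rw [sub_eq_add_neg, rpow_add hq0, rpow_one, pow_succ]
  have := mul_le_mul_of_nonneg_left (qRatioProd_add_one_le hq0 hq1 hα hd)
    (pow_nonneg hq0.le (k + 1))
  rw [pow_succ] at this
  linarith

end qRatio

theorem S_eq_sum_range (q α : ℝ) (hq0 : 0 < q) (y : ℤ → ℝ) (n : ℤ) (N : ℕ) :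
    S q α (n + N) y n = q ^ ((n : ℝ) * (1 - α)) *
      ∑ k ∈ range (N + 1), q ^ k * qRatioProd q α (k + 1) * y (n + k) := by
  rw [S, Int.Icc_eq_finset_map, show (n + N + 1 - n).toNat = N + 1 by omega, sum_map, mul_sum]
  refine sum_congr rfl fun k _ => ?_
  simp only [Function.Embedding.trans_apply, Nat.castEmbedding_apply, addLeftEmbedding_apply,
    qFac_eq]
  have hpow : q ^ ((n + k : ℤ) : ℝ) * q ^ (-(n : ℝ) * α) = q ^ ((n : ℝ) * (1 - α)) * q ^ k := by
    rw [← rpow_add hq0, ← rpow_natCast, ← rpow_add hq0]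
    push_cast
    ring_nf
  rw [show ((n + k + 1 - n : ℤ) : ℝ) = k + 1 by push_cast; ring, ← mul_assoc, hpow]
  ring

theorem S_add_one_eq_sum_range (q α : ℝ) (hq0 : 0 < q) (y : ℤ → ℝ) (n : ℤ) (N : ℕ) :
    S q α (n + (N + 1 : ℕ)) y (n + 1) = q ^ ((n : ℝ) * (1 - α)) * (q ^ (1 - α) *
      ∑ k ∈ range (N + 1), q ^ k * qRatioProd q α (k + 1) * y (n + (k + 1 : ℕ))) := by
  have hscale : q ^ (((n + 1 : ℤ) : ℝ) * (1 - α)) = q ^ ((n : ℝ) * (1 - α)) * q ^ (1 - α) := by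
    rw [← rpow_add hq0]
    push_cast
    ring_nf
  have hshift : ∀ k : ℕ, n + 1 + k = n + (k + 1 : ℕ) := fun k => by push_cast; ring
  rw [show n + ((N + 1 : ℕ) : ℤ) = n + 1 + N by push_cast; ring, S_eq_sum_range q α hq0,
    hscale, mul_assoc]
  simp only [hshift]

/-- Strict version: if `y(a) > 0` (with `a = q^{n0}`) and `y` is strictly
increasing on `T_q` (i.e. `y(q^{n-1}) > y(q^n)`), then the Riemann q-fractional
derivative of order `α ∈ (0,1)` based at `qa` is strictly positive at every
`t = q^n`, `n < n0`. -/
theorem qFrac_pos_of_strict_increasing (q α : ℝ) (hq0 : 0 < q) (hq1 : q < 1)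
    (hα0 : 0 < α) (hα1 : α < 1) (n0 : ℤ) (y : ℤ → ℝ)
    (hy : 0 < y n0)
    (hinc : ∀ n : ℤ, n ≤ n0 → y n < y (n - 1)) :
    ∀ n : ℤ, n < n0 → 0 < S q α n0 y n - S q α n0 y (n + 1) := by
  intro n hn
  obtain ⟨N, rfl⟩ : ∃ N : ℕ, n0 = n + (N + 1 : ℕ) := ⟨(n0 - n - 1).toNat, by omega⟩
  have hanti : AntitoneOn y (Set.Iic (n + (N + 1 : ℕ))) :=
    antitoneOn_of_le_pred Set.ordConnected_Iic fun m _ hm _ => by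
      simpa [Order.pred_eq_sub_one] using (hinc m hm).le
  have hb : ∀ k : ℕ, 0 < q ^ k * qRatioProd q α (k + 1) := fun k =>
    mul_pos (pow_pos hq0 k) (qRatioProd_pos hq0 hq1 hα0.le (by linarith [k.cast_nonneg (α := ℝ)]))
  have hbr : ∀ k : ℕ, q ^ (k + 1) * qRatioProd q α ((k + 1 : ℕ) + 1)
      ≤ q ^ (1 - α) * (q ^ k * qRatioProd q α (k + 1)) := fun k => by
    simpa using pow_succ_mul_qRatioProd_add_one_le hq0 hq1 hα0.le
      (by linarith [k.cast_nonneg (α := ℝ)] : α < k + 1) k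
  have key := sum_range_succ_mul_sub_mul_sum_range_pos (z := fun k : ℕ => y (n + k)) (N + 1) hb
    hbr (rpow_le_one hq0.le hq1.le (by linarith))
    (fun k hk => hanti (Set.mem_Iic.2 (by omega)) (Set.mem_Iic.2 (by omega)) (by omega))
    (by simpa using hy.trans_le (hanti (Set.mem_Iic.2 (by omega)) Set.self_mem_Iic (by omega)))
  rw [S_eq_sum_range q α hq0, S_add_one_eq_sum_range q α hq0, ← mul_sub]
  exact mul_pos (rpow_pos_of_pos hq0 _) key
end
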